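/- Let $\epsilon, \Lambda \in \mathbb{R}$ and define $W : \mathbb{C}^3 \to \mathbb{C}$ by $W(u_0,u_1,u_2) = e^{-\Lambda} u_0 + u_1 + u_2 + e^{-\epsilon} u_0 u_1 u_2 - e^{-\epsilon}$. Then $W$ has exactly two critical points, given by $u_1 = u_2 = e^{-\Lambda} u_0 = \pm i\, e^{(\epsilon - \Lambda)/2}$, i.e., $(u_0, u_1, u_2) = (\pm i\, e^{\Lambda} e^{(\epsilon-\Lambda)/2},\ \pm i\, e^{(\epsilon-\Lambda)/2},\ \pm i\, e^{(\epsilon-\Lambda)/2})$, and both are nondegenerate (the Hessian determinant is nonzero there). -/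
import Mathlib

theorem stmt11 (ε Λ : ℝ) :
    (∀ u₀ u₁ u₂ : ℂ,
      ((Real.exp (-Λ) : ℂ) + (Real.exp (-ε) : ℂ) * (u₁ * u₂) = 0 ∧
       1 + (Real.exp (-ε) : ℂ) * (u₀ * u₂) = 0 ∧
       1 + (Real.exp (-ε) : ℂ) * (u₀ * u₁) = 0) ↔
      ((u₀, u₁, u₂) = (Complex.I * Real.exp Λ * Real.exp ((ε - Λ) / 2),
          Complex.I * Real.exp ((ε - Λ) / 2), Complex.I * Real.exp ((ε - Λ) / 2)) ∨
       (u₀, u₁, u₂) = (-(Complex.I * Real.exp Λ * Real.exp ((ε - Λ) / 2)),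
          -(Complex.I * Real.exp ((ε - Λ) / 2)), -(Complex.I * Real.exp ((ε - Λ) / 2))))) ∧
    (∀ u₀ u₁ u₂ : ℂ,
      ((Real.exp (-Λ) : ℂ) + (Real.exp (-ε) : ℂ) * (u₁ * u₂) = 0 ∧
       1 + (Real.exp (-ε) : ℂ) * (u₀ * u₂) = 0 ∧
       1 + (Real.exp (-ε) : ℂ) * (u₀ * u₁) = 0) →
      Matrix.det !![(0 : ℂ), (Real.exp (-ε) : ℂ) * u₂, (Real.exp (-ε) : ℂ) * u₁;
                    (Real.exp (-ε) : ℂ) * u₂, 0, (Real.exp (-ε) : ℂ) * u₀;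
                    (Real.exp (-ε) : ℂ) * u₁, (Real.exp (-ε) : ℂ) * u₀, 0] ≠ 0) := by
  set b : ℂ := (Real.exp (-ε) : ℂ) with hbdef
  set a : ℂ := (Real.exp (-Λ) : ℂ) with hadef
  set c : ℂ := (Real.exp ((ε - Λ) / 2) : ℂ) with hcdef
  set e : ℂ := (Real.exp Λ : ℂ) with hedef
  have hb : b ≠ 0 := by
    rw [hbdef]; exact_mod_cast Real.exp_ne_zero _
  have hc : c ≠ 0 := by
    rw [hcdef]; exact_mod_cast Real.exp_ne_zero _
  have hbcR : Real.exp (-ε) * Real.exp ((ε - Λ) / 2) ^ 2 = Real.exp (-Λ) := by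
    rw [sq, ← Real.exp_add, ← Real.exp_add]; congr 1; ring
  have hbc : b * c ^ 2 = a := by
    rw [hbdef, hcdef, hadef]; exact_mod_cast hbcR
  have hbaR : Real.exp (-ε) * (Real.exp Λ * Real.exp ((ε - Λ) / 2)) *
      Real.exp ((ε - Λ) / 2) = 1 := by
    rw [← Real.exp_add, ← Real.exp_add, ← Real.exp_add,
      show -ε + (Λ + (ε - Λ) / 2) + (ε - Λ) / 2 = 0 by ring]
    exact Real.exp_zero
  have hba : b * (e * c) * c = 1 := by
    rw [hbdef, hcdef, hedef]; exact_mod_cast hbaR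
  have hI := Complex.I_sq
  constructor
  · intro u₀ u₁ u₂
    constructor
    · rintro ⟨h1, h2, h3⟩
      have hu0 : u₀ ≠ 0 := by rintro rfl; simp at h2
      have h12 : u₂ = u₁ := by
        have h : u₀ * (b * u₂) = u₀ * (b * u₁) := by linear_combination h2 - h3
        exact mul_left_cancel₀ hb (mul_left_cancel₀ hu0 h)
      subst h12
      have hfac : (u₂ - Complex.I * c) * (u₂ + Complex.I * c) = 0 := by
        have h : b * ((u₂ - Complex.I * c) * (u₂ + Complex.I * c)) = 0 := by
          linear_combination h1 + hbc - b * c ^ 2 * hI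
        exact (mul_eq_zero.mp h).resolve_left hb
      have hIc : b * (Complex.I * c) ≠ 0 :=
        mul_ne_zero hb (mul_ne_zero Complex.I_ne_zero hc)
      rcases mul_eq_zero.mp hfac with h | h
      · left
        have hu2 : u₂ = Complex.I * c := sub_eq_zero.mp h
        subst hu2
        have hu0' : b * (Complex.I * c) * u₀ = b * (Complex.I * c) * (Complex.I * e * c) := by
          linear_combination h3 + hba - (b * e * c ^ 2) * hI
        have heq := mul_left_cancel₀ hIc hu0'
        rw [heq]
      · right
        have hu2 : u₂ = -(Complex.I * c) := eq_neg_of_add_eq_zero_left h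
        subst hu2
        have hu0' : b * (Complex.I * c) * u₀ =
            b * (Complex.I * c) * (-(Complex.I * e * c)) := by
          linear_combination -h3 - hba + (b * e * c ^ 2) * hI
        have heq := mul_left_cancel₀ hIc hu0'
        rw [heq]
    · rintro (h | h) <;>
      · simp only [Prod.mk.injEq] at h
        obtain ⟨h0, h1, h2⟩ := h
        subst h0; subst h1; subst h2
        refine ⟨?_, ?_, ?_⟩
        · linear_combination -hbc + b * c ^ 2 * hI
        · linear_combination -hba + b * e * c ^ 2 * hI
        · linear_combination -hba + b * e * c ^ 2 * hI
  · rintro u₀ u₁ u₂ ⟨h1, h2, h3⟩ hdet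
    have hu0 : u₀ ≠ 0 := by rintro rfl; simp at h2
    have hu1 : u₁ ≠ 0 := by rintro rfl; simp at h3
    have hu2 : u₂ ≠ 0 := by rintro rfl; simp at h2
    simp [Matrix.det_fin_three] at hdet
    have h : (2 : ℂ) * b ^ 3 * (u₀ * u₁ * u₂) = 0 := by
      linear_combination hdet
    simp [hb, hu0, hu1, hu2] at h
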